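/- Let s > 0 be real. Then there exists a constant C > 0 such that for every positive integer N and every real x > 1, the scaled one-point density satisfies N·ρ_N^s(Nx) ≤ C·x^{−2s−2}. -/

import Mathlib

open MeasureTheory Real Filter

noncomputable section

/-- Pochhammer symbol `(a)_j = a(a+1)⋯(a+j-1)` for complex `a`. -/
def poch (a : ℂ) (j : ℕ) : ℂ := ∏ i ∈ Finset.range j, (a + i)

/-- The monic pseudo-Jacobi polynomial `p_m^{s,N}` (complex-valued formula). -/
def pJC (s : ℝ) (N m : ℕ) (x : ℝ) : ℂ :=
  ∑ j ∈ Finset.range (m + 1),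
    poch (-(m : ℂ)) j * poch ((s : ℂ) + N - m) j /
      (poch (2 * (s : ℂ) + 2 * N - 2 * m) j * (Nat.factorial j : ℂ)) *
    (-2 * Complex.I) ^ j * ((x : ℂ) - Complex.I) ^ (m - j)

/-- The pseudo-Jacobi polynomial as a real-valued function (it has real values
for real `s` and real `x`). -/
def pJ (s : ℝ) (N m : ℕ) (x : ℝ) : ℝ := (pJC s N m x).re

/-- The pseudo-Jacobi weight `φ_N^s(x) = (1+x²)^{-(N+s)}`. -/
def phi (s : ℝ) (N : ℕ) (x : ℝ) : ℝ := (1 + x ^ 2) ^ (-((N : ℝ) + s))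

/-- The normalizing constant `γ²_{N-1,s}`. -/
def gammaSq (s : ℝ) (N : ℕ) : ℝ :=
  (2 : ℝ) ^ (2 * s) / Real.pi * Real.Gamma (2 * s + N + 1) * Real.Gamma (s + 1) ^ 2 /
    (Real.Gamma N * Real.Gamma (2 * s + 1) * Real.Gamma (2 * s + 2))

/-- The one-point density of the generalized Cauchy (Hua–Pickrell) ensemble. -/
def rho (s : ℝ) (N : ℕ) (x : ℝ) : ℝ :=
  gammaSq s N * phi s N x *
    (pJ s N (N - 1) x * deriv (pJ s N N) x - pJ s N N x * deriv (pJ s N (N - 1)) x)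

/-- The sum of moments `Q(k;s,N) = ∫_ℝ |x|^{2k}(1+x²)ρ_N^s(x) dx`,
with `|x|^{2k} = exp(2k log|x|)`. -/
def Qmom (k : ℂ) (s : ℝ) (N : ℕ) : ℂ :=
  ∫ x : ℝ, Complex.exp (2 * k * Real.log |x|) * (((1 + x ^ 2) * rho s N x : ℝ) : ℂ)

/-- `J(k;s,N) = Q(k;s,N)/(Γ(k+1/2)Γ(s-k-1/2))`. -/
def Jmom (k : ℂ) (s : ℝ) (N : ℕ) : ℂ :=
  Qmom k s N / (Complex.Gamma (k + 1 / 2) * Complex.Gamma ((s : ℂ) - k - 1 / 2))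

/-- The continuous-Hahn polynomial `S_n(x;a,b,c,d)`. -/
def contHahn (n : ℕ) (x a b c d : ℂ) : ℂ :=
  Complex.I ^ n * (poch (a + c) n * poch (a + d) n / (Nat.factorial n : ℂ)) *
    ∑ j ∈ Finset.range (n + 1),
      poch (-(n : ℂ)) j * poch (n + a + b + c + d - 1) j * poch (a + Complex.I * x) j /
        (poch (a + c) j * poch (a + d) j * (Nat.factorial j : ℂ))

end

noncomputable section

/-!
For real `y`, `p_m(y) = Re P_m(y - i)` with `P_m(w) = Σ_j K_j w^(m-j)` and `|K_j| ≤ (2m)^j / j!`.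
Since `Re A · Re B' - Re B · Re A'` is half the real part of `(A B' - B A') + (A B̄' - B̄ A')`, the
Wronskian of `p_{N-1}` and `p_N` at `y` splits into two double sums of monomial Wronskians in points
`w, z` with `|w| = |z| = t = √(1 + y²)` and `|w - z| ≤ 2`. In each of them the top powers cancel up to
the factor `1 + j - l`, so for `y ≥ N` (hence `t ≥ N`) the Wronskian is at most `3 e⁸ (1 + y²)^(N-1)`,
uniformly in `N`. Thus `ρ_N(y) ≤ 3 e⁸ γ² (1 + y²)^(-s-1)`; log-convexity of `Γ` gives
`γ²_{N-1,s} = O(N^(2s+1))`, and at `y = N x` the powers of `N` cancel.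
-/

section

open Complex Finset
open scoped ComplexConjugate

theorem Real.Gamma_add_le_mul_rpow {x a : ℝ} (hx : 0 < x) (ha : 0 < a) :
    Real.Gamma (x + a) ≤ Real.Gamma x * (x + a) ^ a := by
  have hxa : 0 < x + a := by linarith
  have hΓx := Real.Gamma_pos_of_pos hx
  have hΓxa := Real.Gamma_pos_of_pos hxa
  -- by log-convexity, the slope of `log ∘ Γ` on `[x, x + a]` is at most its slope on
  -- `[x + a, x + a + 1]`, which is `log (x + a)` by `Γ (y + 1) = y Γ y`
  have hslope := Real.convexOn_log_Gamma.slope_mono_adjacent (Set.mem_Ioi.mpr hx)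
    (Set.mem_Ioi.mpr (by linarith : 0 < x + a + 1)) (by linarith : x < x + a)
    (by linarith : x + a < x + a + 1)
  simp only [Function.comp_apply, Real.Gamma_add_one hxa.ne', add_sub_cancel_left,
    add_sub_cancel_left, div_one, Real.log_mul hxa.ne' hΓxa.ne', div_le_iff₀ ha] at hslope
  rw [← Real.log_le_log_iff hΓxa (by positivity), Real.log_mul hΓx.ne' (by positivity),
    Real.log_rpow hxa]
  linarith

def descPoly (c : ℕ → ℂ) (m : ℕ) (w : ℂ) : ℂ :=
  ∑ j ∈ range (m + 1), c j * w ^ (m - j)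

def descPolyDeriv (c : ℕ → ℂ) (m : ℕ) (w : ℂ) : ℂ :=
  ∑ j ∈ range (m + 1), c j * (m - j : ℕ) * w ^ (m - j - 1)

lemma hasDerivAt_descPoly (c : ℕ → ℂ) (m : ℕ) (w : ℂ) :
    HasDerivAt (descPoly c m) (descPolyDeriv c m w) w := by
  unfold descPoly descPolyDeriv
  refine HasDerivAt.fun_sum fun j _ => ?_
  simpa [mul_assoc] using ((hasDerivAt_pow (m - j) w).const_mul (c j))

lemma conj_descPoly (c : ℕ → ℂ) (m : ℕ) (w : ℂ) :
    conj (descPoly c m w) = descPoly (conj ∘ c) m (conj w) := by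
  simp [descPoly, map_sum]

lemma conj_descPolyDeriv (c : ℕ → ℂ) (m : ℕ) (w : ℂ) :
    conj (descPolyDeriv c m w) = descPolyDeriv (conj ∘ c) m (conj w) := by
  simp [descPolyDeriv, map_sum]

lemma descPoly_mul_descPolyDeriv_sub (a b : ℕ → ℂ) (m n : ℕ) (w z : ℂ) :
    descPoly a m w * descPolyDeriv b n z - descPoly b n z * descPolyDeriv a m w =
      ∑ j ∈ range (m + 1), ∑ l ∈ range (n + 1), a j * b l *
        ((n - l : ℕ) * (w ^ (m - j) * z ^ (n - l - 1)) -
          (m - j : ℕ) * (z ^ (n - l) * w ^ (m - j - 1))) := by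
  simp only [descPoly, descPolyDeriv, sum_mul_sum]
  rw [sum_comm (s := range (n + 1)), ← sum_sub_distrib]
  refine sum_congr rfl fun j _ => ?_
  rw [← sum_sub_distrib]
  exact sum_congr rfl fun l _ => by ring

lemma norm_monomialWronskian_mul_sq_le {w z : ℂ} {t : ℝ} (hw : ‖w‖ = t) (hz : ‖z‖ = t)
    (hwz : ‖w - z‖ ≤ 2) (p q : ℕ) :
    ‖(q : ℂ) * (w ^ p * z ^ (q - 1)) - (p : ℂ) * (z ^ q * w ^ (p - 1))‖ * t ^ 2 ≤
      (|(q : ℝ) - p| * t + 2 * p) * t ^ (p + q) := by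
  have ht : 0 ≤ t := hw ▸ norm_nonneg w
  rcases p with _ | p <;> rcases q with _ | q
  · simp
  · simp only [pow_zero, CharP.cast_eq_zero, zero_mul, sub_zero, one_mul, norm_mul, norm_pow,
      hz, Complex.norm_natCast, Nat.add_sub_cancel, zero_add, mul_zero, add_zero]
    rw [abs_of_nonneg (by positivity)]
    exact le_of_eq (by ring)
  · simp only [pow_zero, CharP.cast_eq_zero, zero_mul, zero_sub, norm_neg, norm_mul, norm_pow,
      hw, Complex.norm_natCast, one_mul, Nat.add_sub_cancel, add_zero, zero_sub, abs_neg]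
    rw [abs_of_nonneg (by positivity)]
    have : (0 : ℝ) ≤ 2 * (p + 1 : ℕ) * t ^ (p + 1) := by positivity
    linear_combination this
  · have hfactor : ((q + 1 : ℕ) : ℂ) * (w ^ (p + 1) * z ^ (q + 1 - 1)) -
        ((p + 1 : ℕ) : ℂ) * (z ^ (q + 1) * w ^ (p + 1 - 1)) =
        w ^ p * z ^ q * (((q : ℂ) - p) * w + (p + 1) * (w - z)) := by
      simp only [Nat.add_sub_cancel]; push_cast; ring
    have hlin : ‖((q : ℂ) - p) * w + (p + 1) * (w - z)‖ ≤ |(q : ℝ) - p| * t + 2 * (p + 1) := by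
      refine (norm_add_le _ _).trans (add_le_add ?_ ?_)
      · rw [norm_mul, hw, ← Complex.ofReal_natCast q, ← Complex.ofReal_natCast p,
          ← Complex.ofReal_sub, Complex.norm_real, Real.norm_eq_abs]
      · rw [norm_mul, mul_comm (2 : ℝ)]
        gcongr
        exact_mod_cast (Complex.norm_natCast (p + 1)).le
    rw [hfactor, norm_mul, norm_mul, norm_pow, norm_pow, hw, hz]
    calc t ^ p * t ^ q * ‖((q : ℂ) - p) * w + (p + 1) * (w - z)‖ * t ^ 2
        ≤ t ^ p * t ^ q * (|(q : ℝ) - p| * t + 2 * (p + 1)) * t ^ 2 := by gcongr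
      _ = (|((q + 1 : ℕ) : ℝ) - (p + 1 : ℕ)| * t + 2 * (p + 1 : ℕ)) * t ^ (p + 1 + (q + 1)) := by
        push_cast; ring_nf

lemma norm_monomialWronskian_mul_pow_le {w z : ℂ} {t : ℝ} (hw : ‖w‖ = t) (hz : ‖z‖ = t)
    (hwz : ‖w - z‖ ≤ 2) {m j l : ℕ} (hmt : (m : ℝ) + 1 ≤ t) (hj : j ≤ m) (hl : l ≤ m + 1) :
    ‖((m + 1 - l : ℕ) : ℂ) * (w ^ (m - j) * z ^ (m + 1 - l - 1)) -
        ((m - j : ℕ) : ℂ) * (z ^ (m + 1 - l) * w ^ (m - j - 1))‖ * t ^ (j + l) ≤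
      (3 + j + l) * t ^ (2 * m) := by
  have ht : 0 < t := by linarith [(m.cast_nonneg : (0 : ℝ) ≤ m)]
  have hcoef : |((m + 1 - l : ℕ) : ℝ) - (m - j : ℕ)| * t + 2 * (m - j : ℕ) ≤ (3 + j + l) * t := by
    have h1 : |((m + 1 - l : ℕ) : ℝ) - (m - j : ℕ)| ≤ 1 + j + l := by
      rw [Nat.cast_sub hl, Nat.cast_sub hj, abs_le]; push_cast
      constructor <;> linarith [(j.cast_nonneg : (0 : ℝ) ≤ j), (l.cast_nonneg : (0 : ℝ) ≤ l)]
    have h2 : ((m - j : ℕ) : ℝ) ≤ t := by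
      rw [Nat.cast_sub hj]; linarith [(j.cast_nonneg : (0 : ℝ) ≤ j)]
    nlinarith
  have hexp : m - j + (m + 1 - l) + 1 + (j + l) = 2 * m + 2 := by omega
  refine le_of_mul_le_mul_right ?_ (pow_pos ht 2)
  calc _ = (‖_‖ * t ^ 2) * t ^ (j + l) := by ring
    _ ≤ ((3 + j + l) * t) * t ^ (m - j + (m + 1 - l)) * t ^ (j + l) := by
      refine mul_le_mul_of_nonneg_right ?_ (by positivity)
      exact (norm_monomialWronskian_mul_sq_le hw hz hwz _ _).trans
        (mul_le_mul_of_nonneg_right hcoef (by positivity))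
    _ = (3 + j + l) * t ^ (2 * m) * t ^ 2 := by
      rw [mul_assoc _ (t ^ (2 * m)), ← pow_add, ← hexp]; ring

lemma norm_descPoly_wronskian_le {a b : ℕ → ℂ} {m : ℕ} {w z : ℂ} {t : ℝ} (hw : ‖w‖ = t)
    (hz : ‖z‖ = t) (hwz : ‖w - z‖ ≤ 2) (hmt : (m : ℝ) + 1 ≤ t)
    (ha : ∀ j ≤ m, ‖a j‖ ≤ (2 * t) ^ j / j.factorial)
    (hb : ∀ l ≤ m + 1, ‖b l‖ ≤ (2 * t) ^ l / l.factorial) :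
    ‖descPoly a m w * descPolyDeriv b (m + 1) z - descPoly b (m + 1) z * descPolyDeriv a m w‖ ≤
      3 * Real.exp 8 * t ^ (2 * m) := by
  have ht : 0 < t := by linarith [(m.cast_nonneg : (0 : ℝ) ≤ m)]
  set e : ℕ → ℝ := fun j => 4 ^ j / j.factorial
  have hterm : ∀ j ∈ range (m + 1), ∀ l ∈ range (m + 1 + 1),
      ‖a j * b l * (((m + 1 - l : ℕ) : ℂ) * (w ^ (m - j) * z ^ (m + 1 - l - 1)) -
        ((m - j : ℕ) : ℂ) * (z ^ (m + 1 - l) * w ^ (m - j - 1)))‖ ≤ 3 * e j * e l * t ^ (2 * m) := by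
    intro j hj l hl
    rw [mem_range, Nat.lt_succ_iff] at hj hl
    have hjl : (3 + j + l : ℝ) ≤ 3 * 2 ^ j * 2 ^ l := by
      have h2j : (j : ℝ) + 1 ≤ 2 ^ j := by exact_mod_cast j.lt_two_pow_self
      have h2l : (l : ℝ) + 1 ≤ 2 ^ l := by exact_mod_cast l.lt_two_pow_self
      nlinarith [(j.cast_nonneg : (0 : ℝ) ≤ j), (l.cast_nonneg : (0 : ℝ) ≤ l)]
    rw [norm_mul, norm_mul]
    calc ‖a j‖ * ‖b l‖ * ‖_‖ ≤ (2 * t) ^ j / j.factorial * ((2 * t) ^ l / l.factorial) * ‖_‖ := by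
          gcongr
          exacts [ha j hj, hb l hl]
      _ = 2 ^ j * 2 ^ l / (j.factorial * l.factorial) * (‖_‖ * t ^ (j + l)) := by
          rw [mul_pow, mul_pow, pow_add]; ring
      _ ≤ 2 ^ j * 2 ^ l / (j.factorial * l.factorial) * ((3 * 2 ^ j * 2 ^ l) * t ^ (2 * m)) := by
          refine mul_le_mul_of_nonneg_left ?_ (by positivity)
          exact (norm_monomialWronskian_mul_pow_le hw hz hwz hmt hj hl).trans
            (mul_le_mul_of_nonneg_right hjl (by positivity))
      _ = 3 * e j * e l * t ^ (2 * m) := by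
          simp only [e, show (4 : ℝ) = 2 * 2 by norm_num, mul_pow]; ring
  have hexp : ∀ n, ∑ j ∈ range n, e j ≤ Real.exp 4 :=
    Real.sum_le_exp_of_nonneg (by norm_num)
  rw [descPoly_mul_descPolyDeriv_sub]
  calc _ ≤ ∑ j ∈ range (m + 1), ∑ l ∈ range (m + 1 + 1), 3 * e j * e l * t ^ (2 * m) :=
        (norm_sum_le _ _).trans <| sum_le_sum fun j hj =>
          (norm_sum_le _ _).trans <| sum_le_sum fun l hl => hterm j hj l hl
    _ = 3 * (∑ j ∈ range (m + 1), e j) * (∑ l ∈ range (m + 1 + 1), e l) * t ^ (2 * m) := by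
        rw [mul_assoc 3, sum_mul_sum, mul_sum, sum_mul]
        refine sum_congr rfl fun j _ => ?_
        rw [mul_sum, sum_mul]
        exact sum_congr rfl fun l _ => by ring
    _ ≤ 3 * Real.exp 4 * Real.exp 4 * t ^ (2 * m) := by
        gcongr <;> exact hexp _
    _ = 3 * Real.exp 8 * t ^ (2 * m) := by
        rw [mul_assoc 3, ← Real.exp_add]; norm_num

lemma re_mul_re_sub_re_mul_re (A B A' B' : ℂ) :
    A.re * B'.re - B.re * A'.re = ((A * B' - B * A').re + (A * conj B' - conj B * A').re) / 2 := by
  simp only [sub_re, mul_re, conj_re, conj_im]; ring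

def pJCoeff (s : ℝ) (N m j : ℕ) : ℂ :=
  poch (-(m : ℂ)) j * poch ((s : ℂ) + N - m) j /
    (poch (2 * (s : ℂ) + 2 * N - 2 * m) j * (Nat.factorial j : ℂ)) * (-2 * Complex.I) ^ j

lemma pJC_eq_descPoly (s : ℝ) (N m : ℕ) (x : ℝ) :
    pJC s N m x = descPoly (pJCoeff s N m) m (x - I) := rfl

lemma hasDerivAt_pJ (s : ℝ) (N m : ℕ) (y : ℝ) :
    HasDerivAt (pJ s N m) (descPolyDeriv (pJCoeff s N m) m (y - I)).re y := by
  have h := (hasDerivAt_descPoly (pJCoeff s N m) m (y - I)).comp (y : ℂ)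
    ((hasDerivAt_id (y : ℂ)).sub_const I)
  rw [mul_one] at h
  rw [show pJ s N m = fun x : ℝ => (descPoly (pJCoeff s N m) m (x - I)).re from
    funext fun x => congrArg re (pJC_eq_descPoly s N m x)]
  exact h.real_of_complex

lemma norm_poch_neg_natCast_le {m j : ℕ} (hj : j ≤ m) : ‖poch (-(m : ℂ)) j‖ ≤ (m : ℝ) ^ j := by
  rw [poch, norm_prod]
  calc _ ≤ ∏ _i ∈ range j, (m : ℝ) := prod_le_prod (fun _ _ => norm_nonneg _) fun i hi => ?_
    _ = (m : ℝ) ^ j := by rw [prod_const, card_range]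
  have hi : (i : ℝ) ≤ m := by exact_mod_cast (mem_range.mp hi).le.trans hj
  rw [← Complex.ofReal_natCast, ← Complex.ofReal_natCast, ← Complex.ofReal_neg, ← Complex.ofReal_add,
    Complex.norm_real, Real.norm_eq_abs, abs_le]
  constructor <;> linarith [(i.cast_nonneg : (0 : ℝ) ≤ i)]

lemma norm_poch_div_poch_two_mul_le_one {a : ℝ} (ha : 0 < a) (j : ℕ) :
    ‖poch (a : ℂ) j / poch (2 * a : ℂ) j‖ ≤ 1 := by
  have hnorm : ∀ b : ℝ, 0 < b → ‖poch (b : ℂ) j‖ = ∏ i ∈ range j, (b + i) := fun b hb => by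
    rw [poch, norm_prod]
    refine prod_congr rfl fun i _ => ?_
    rw [← Complex.ofReal_natCast, ← Complex.ofReal_add, Complex.norm_real, Real.norm_eq_abs,
      abs_of_pos (by positivity)]
  rw [norm_div, hnorm a ha, ← Complex.ofReal_ofNat, ← Complex.ofReal_mul, hnorm (2 * a) (by positivity),
    div_le_one (prod_pos fun i _ => by positivity)]
  exact prod_le_prod (fun i _ => by positivity) fun i _ => by linarith

lemma norm_pJCoeff_le {s : ℝ} {N m j : ℕ} (hsNm : 0 < s + N - m) (hj : j ≤ m) :
    ‖pJCoeff s N m j‖ ≤ (2 * m) ^ j / j.factorial := by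
  have hpoch := norm_poch_div_poch_two_mul_le_one hsNm j
  have hrw : pJCoeff s N m j = poch (-(m : ℂ)) j *
      (poch ((s + N - m : ℝ) : ℂ) j / poch (2 * (s + N - m : ℝ) : ℂ) j) / j.factorial *
        (-2 * I) ^ j := by
    rw [pJCoeff]; push_cast; ring_nf
  rw [hrw, norm_mul, norm_div, norm_mul, norm_pow, Complex.norm_natCast, mul_pow,
    show ‖-2 * I‖ = 2 by simp]
  calc _ ≤ (m : ℝ) ^ j * 1 / j.factorial * 2 ^ j := by
        gcongr
        exact norm_poch_neg_natCast_le hj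
    _ = _ := by ring

lemma abs_pJ_wronskian_le {s : ℝ} (hs : 0 < s) {m : ℕ} {y : ℝ} (hy : (m : ℝ) + 1 ≤ y) :
    |pJ s (m + 1) m y * deriv (pJ s (m + 1) (m + 1)) y -
        pJ s (m + 1) (m + 1) y * deriv (pJ s (m + 1) m) y| ≤
      3 * Real.exp 8 * (1 + y ^ 2) ^ m := by
  set u : ℂ := y - I
  set t := ‖u‖
  have hconj : conj u = y + I := by simp [u]
  have hnorm_conj : ‖conj u‖ = t := RCLike.norm_conj u
  have ht_sq : t ^ 2 = 1 + y ^ 2 := by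
    rw [Complex.sq_norm, Complex.normSq_apply]; simp [u]; ring
  have hyt : (m : ℝ) + 1 ≤ t := hy.trans <| by simpa [u] using Complex.re_le_norm u
  have hcoeff : ∀ n ≤ m + 1, 0 < s + (m + 1 : ℕ) - n → ∀ j ≤ n,
      ‖pJCoeff s (m + 1) n j‖ ≤ (2 * t) ^ j / j.factorial := fun n hn hsn j hj =>
    (norm_pJCoeff_le hsn hj).trans <| by
      gcongr; exact (Nat.cast_le.mpr hn).trans (by simpa using hyt)
  have ha := hcoeff m m.le_succ (by push_cast; linarith)
  have hb := hcoeff (m + 1) le_rfl (by simpa using hs)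
  have hb_conj : ∀ l ≤ m + 1, ‖(conj ∘ pJCoeff s (m + 1) (m + 1)) l‖ ≤ (2 * t) ^ l / l.factorial :=
    fun l hl => (RCLike.norm_conj _).trans_le (hb l hl)
  have hholo := norm_descPoly_wronskian_le rfl rfl (by simp) hyt ha hb
  have hmixed := norm_descPoly_wronskian_le rfl hnorm_conj
    (by rw [hconj, show (y : ℂ) - I - (y + I) = -2 * I by ring]; simp) hyt ha hb_conj
  rw [(hasDerivAt_pJ s (m + 1) m y).deriv, (hasDerivAt_pJ s (m + 1) (m + 1) y).deriv]
  show |(descPoly _ m u).re * (descPolyDeriv _ (m + 1) u).re -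
    (descPoly _ (m + 1) u).re * (descPolyDeriv _ m u).re| ≤ _
  rw [re_mul_re_sub_re_mul_re, conj_descPoly, conj_descPolyDeriv, ← ht_sq, ← pow_mul, abs_div,
    abs_two, div_le_iff₀ two_pos]
  calc _ ≤ |(_ : ℂ).re| + |(_ : ℂ).re| := abs_add_le _ _
    _ ≤ _ := add_le_add ((abs_re_le_norm _).trans hholo) ((abs_re_le_norm _).trans hmixed)
    _ = _ := by ring

lemma gammaSq_pos {s : ℝ} (hs : -1 / 2 < s) {N : ℕ} (hN : 1 ≤ N) : 0 < gammaSq s N := by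
  have hN : (0 : ℝ) < N := by exact_mod_cast hN
  unfold gammaSq
  have := Real.pi_pos
  have := Real.Gamma_pos_of_pos hN
  have := Real.Gamma_pos_of_pos (by linarith : 0 < 2 * s + N + 1)
  have := Real.Gamma_pos_of_pos (by linarith : 0 < s + 1)
  have := Real.Gamma_pos_of_pos (by linarith : 0 < 2 * s + 1)
  have := Real.Gamma_pos_of_pos (by linarith : 0 < 2 * s + 2)
  positivity

lemma gammaSq_le_mul_rpow {s : ℝ} (hs : -1 / 2 < s) :
    ∃ c > 0, ∀ N : ℕ, 1 ≤ N → gammaSq s N ≤ c * (N : ℝ) ^ (2 * s + 1) := by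
  have hs1 : 0 < 2 * s + 1 := by linarith
  have hs2 : 0 < 2 * s + 2 := by linarith
  have h1 := Real.Gamma_pos_of_pos (by linarith : 0 < s + 1)
  have h2 := Real.Gamma_pos_of_pos hs1
  have h3 := Real.Gamma_pos_of_pos hs2
  have h4 := Real.rpow_pos_of_pos hs2 (2 * s + 1)
  refine ⟨2 ^ (2 * s) / π * Real.Gamma (s + 1) ^ 2 / (Real.Gamma (2 * s + 1) *
    Real.Gamma (2 * s + 2)) * (2 * s + 2) ^ (2 * s + 1), by positivity, fun N hN => ?_⟩
  have hN1 : (1 : ℝ) ≤ N := by exact_mod_cast hN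
  have hΓN := Real.Gamma_pos_of_pos (by positivity : (0 : ℝ) < N)
  have hΓ : Real.Gamma (2 * s + N + 1) ≤ Real.Gamma N * ((2 * s + 2) * N) ^ (2 * s + 1) := by
    calc Real.Gamma (2 * s + N + 1) = Real.Gamma (N + (2 * s + 1)) := by ring_nf
      _ ≤ Real.Gamma N * (N + (2 * s + 1)) ^ (2 * s + 1) :=
        Real.Gamma_add_le_mul_rpow (by positivity) hs1
      _ ≤ Real.Gamma N * ((2 * s + 2) * N) ^ (2 * s + 1) := by gcongr; nlinarith
  rw [Real.mul_rpow hs2.le (by positivity)] at hΓ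
  unfold gammaSq
  rw [div_le_iff₀ (by positivity)]
  calc _ ≤ 2 ^ (2 * s) / π * (Real.Gamma N * ((2 * s + 2) ^ (2 * s + 1) * N ^ (2 * s + 1))) *
        Real.Gamma (s + 1) ^ 2 := by gcongr
    _ = _ := by generalize Real.Gamma (2 * s + 2) = g at h3 ⊢; field_simp

lemma phi_succ_mul_pow (s : ℝ) (m : ℕ) (y : ℝ) :
    phi s (m + 1) y * (1 + y ^ 2) ^ m = (1 + y ^ 2) ^ (-(s + 1)) := by
  rw [phi, ← Real.rpow_natCast _ m, ← Real.rpow_add (by positivity)]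
  push_cast; ring_nf

lemma rho_le {s : ℝ} (hs : 0 < s) {N : ℕ} (hN : 1 ≤ N) {y : ℝ} (hy : (N : ℝ) ≤ y) :
    rho s N y ≤ 3 * Real.exp 8 * gammaSq s N * (1 + y ^ 2) ^ (-(s + 1)) := by
  obtain ⟨m, rfl⟩ : ∃ m, N = m + 1 := ⟨N - 1, by omega⟩
  have hW := (le_abs_self _).trans (abs_pJ_wronskian_le hs (y := y) (by exact_mod_cast hy))
  have hφ : 0 ≤ phi s (m + 1) y := Real.rpow_nonneg (by positivity) _
  rw [rho, Nat.add_sub_cancel]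
  calc _ ≤ gammaSq s (m + 1) * phi s (m + 1) y * (3 * Real.exp 8 * (1 + y ^ 2) ^ m) :=
        mul_le_mul_of_nonneg_left hW (mul_nonneg (gammaSq_pos (by linarith) hN).le hφ)
    _ = _ := by rw [← phi_succ_mul_pow s m y]; ring

end

theorem stmt19 (s : ℝ) (hs : 0 < s) :
    ∃ C : ℝ, 0 < C ∧ ∀ N : ℕ, 1 ≤ N → ∀ x : ℝ, 1 < x →
      (N : ℝ) * rho s N ((N : ℝ) * x) ≤ C * x ^ (-2 * s - 2) := by
  obtain ⟨c, hc, hγ⟩ := gammaSq_le_mul_rpow (by linarith : -1 / 2 < s)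
  refine ⟨3 * Real.exp 8 * c, by positivity, fun N hN x hx => ?_⟩
  have hN0 : (0 : ℝ) < N := by exact_mod_cast hN
  have hx0 : 0 < x := by linarith
  have hdecay : (1 + (N * x) ^ 2) ^ (-(s + 1)) ≤ (N : ℝ) ^ (-2 * s - 2) * x ^ (-2 * s - 2) := by
    calc (1 + (N * x) ^ 2) ^ (-(s + 1)) ≤ ((N * x) ^ 2) ^ (-(s + 1)) :=
          Real.rpow_le_rpow_of_nonpos (by positivity) (by linarith) (by linarith)
      _ = _ := by
        rw [← Real.rpow_natCast, ← Real.rpow_mul (by positivity),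
          Real.mul_rpow hN0.le hx0.le]
        ring_nf
  have hN_pow : (N : ℝ) * N ^ (2 * s + 1) * N ^ (-2 * s - 2) = 1 := by
    rw [mul_assoc, ← Real.rpow_add hN0, show 2 * s + 1 + (-2 * s - 2) = -1 by ring,
      Real.rpow_neg_one, mul_inv_cancel₀ hN0.ne']
  calc (N : ℝ) * rho s N (N * x)
      ≤ N * (3 * Real.exp 8 * gammaSq s N * (1 + (N * x) ^ 2) ^ (-(s + 1))) := by
        gcongr
        exact rho_le hs hN (le_mul_of_one_le_right hN0.le hx.le)
    _ ≤ N * (3 * Real.exp 8 * (c * N ^ (2 * s + 1)) * (N ^ (-2 * s - 2) * x ^ (-2 * s - 2))) := by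
        gcongr
        exact hγ N hN
    _ = 3 * Real.exp 8 * c * x ^ (-2 * s - 2) * (N * N ^ (2 * s + 1) * N ^ (-2 * s - 2)) := by ring
    _ = _ := by rw [hN_pow, mul_one]

end
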